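/- Let G be a nut graph with nonzero kernel vector x, and let T = {v_1,…,v_k} ⊆ V(G). Suppose there exists a nonempty subset S ⊆ V(G) with S ∩ T = ∅ such that Σ_{v∈S} x_v = 0 and the characteristic vector χ_S is not equal to any row of A_G. Let F be the graph obtained from G by adding, for each i, m_i ≥ 1 new vertices, each having neighbourhood in F exactly equal to N_G(v_i) (duplicates of v_i, not adjacent to v_i, pairwise non-adjacent). Then F satisfies the ACK property. -/

import Mathlib

/-
Since `A_G` is symmetric with kernel spanned by `x`, its range is `xᗮ`; as
`∑_{u ∈ S} x u = 0`, this gives `χ_S = A_G c`. The same coefficients `c`, put on the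
original vertices of `F`, combine the rows of `A_F` into `χ_S` on `V` and into
`χ_S (v i) = 0` on each duplicate of `v i`. The resulting `{0,1}`-vector is not a row of
`A_F`, because the restriction to `V` of every row of `A_F` is a row of `A_G`.
-/

/-- The graph obtained from `G` by adding, for each `i : Fin k`, `m i` new vertices
(`Sum.inr ⟨i, j⟩`), each of whose neighbourhood is exactly `N_G (v i)`: each new vertex
duplicates `v i`, is not adjacent to `v i`, and the new vertices are pairwise
non-adjacent. -/
def dupGraph {V : Type} (G : SimpleGraph V) (k : ℕ) (v : Fin k → V) (m : Fin k → ℕ) :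
    SimpleGraph (V ⊕ (Σ i : Fin k, Fin (m i))) :=
  SimpleGraph.fromRel fun a b =>
    match a, b with
    | Sum.inl u, Sum.inl w => G.Adj u w
    | Sum.inr ⟨i, _⟩, Sum.inl u => G.Adj (v i) u
    | _, _ => False

noncomputable instance {V : Type} (G : SimpleGraph V) (k : ℕ) (v : Fin k → V)
    (m : Fin k → ℕ) : DecidableRel (dupGraph G k v m).Adj := Classical.decRel _


/-- A graph `G` satisfies the ACK property if there is a nonzero `{0,1}`-vector in the row
space of its adjacency matrix `A_G` (over `ℝ`) that is not equal to any row of `A_G`. -/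
def AckProp {V : Type} [Fintype V] (G : SimpleGraph V) [DecidableRel G.Adj] : Prop :=
  ∃ y : V → ℝ, y ≠ 0 ∧ (∀ v, y v = 0 ∨ y v = 1) ∧
    y ∈ Submodule.span ℝ (Set.range fun i => (G.adjMatrix ℝ) i) ∧
    ∀ i, y ≠ (G.adjMatrix ℝ) i

open Matrix

-- The range lies in `xᗮ` by symmetry of `A`, and both have codimension one.
theorem Matrix.IsSymm.mem_range_mulVecLin_of_dotProduct_eq_zero {K n : Type*} [Field K]
    [Fintype n] {A : Matrix n n K} (hA : A.IsSymm)
    (hker : Module.finrank K (LinearMap.ker A.mulVecLin) = 1)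
    {x : n → K} (hx : x ≠ 0) (hAx : A *ᵥ x = 0) {y : n → K} (hy : x ⬝ᵥ y = 0) :
    y ∈ LinearMap.range A.mulVecLin := by
  classical
  set f := dotProductEquiv K n x
  have hf : f ≠ 0 := (LinearEquiv.map_ne_zero_iff _).2 hx
  have hle : LinearMap.range A.mulVecLin ≤ LinearMap.ker f := by
    rintro _ ⟨c, rfl⟩
    rw [LinearMap.mem_ker, dotProductEquiv_apply_apply, mulVecLin_apply, dotProduct_mulVec,
      ← mulVec_transpose, hA.eq, hAx, zero_dotProduct]
  have hrange := LinearMap.finrank_range_add_finrank_ker A.mulVecLin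
  have hkerf := Module.Dual.finrank_ker_add_one_of_ne_zero hf
  have heq := Submodule.eq_of_le_of_finrank_eq hle (by omega)
  rwa [heq, LinearMap.mem_ker]

namespace dupGraph

variable {V : Type} (G : SimpleGraph V) (k : ℕ) (v : Fin k → V) (m : Fin k → ℕ)

@[simp]
theorem adj_inl_inl (u w : V) : (dupGraph G k v m).Adj (.inl u) (.inl w) ↔ G.Adj u w := by
  simp only [dupGraph, SimpleGraph.fromRel_adj, G.adj_comm w u, or_self, and_iff_right_iff_imp]
  exact fun h => by simpa using G.ne_of_adj h

@[simp]
theorem adj_inr_inl (i : Fin k) (j : Fin (m i)) (u : V) :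
    (dupGraph G k v m).Adj (.inr ⟨i, j⟩) (.inl u) ↔ G.Adj (v i) u := by
  simp [dupGraph, SimpleGraph.fromRel_adj]

@[simp]
theorem adj_inl_inr (u : V) (i : Fin k) (j : Fin (m i)) :
    (dupGraph G k v m).Adj (.inl u) (.inr ⟨i, j⟩) ↔ G.Adj u (v i) := by
  rw [SimpleGraph.adj_comm, adj_inr_inl, G.adj_comm]

theorem adjMatrix_apply_inl [DecidableRel G.Adj] {R : Type*} [Zero R] [One R]
    (a : V ⊕ Σ i : Fin k, Fin (m i)) (w : V) :
    (dupGraph G k v m).adjMatrix R a (.inl w) =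
      G.adjMatrix R (Sum.elim id (fun p => v p.1) a) w := by
  rcases a with u | ⟨i, j⟩ <;> simp [SimpleGraph.adjMatrix_apply]

theorem vecMul_adjMatrix {R : Type*} [NonAssocSemiring R] [Fintype V] [DecidableRel G.Adj]
    (c : V → R) :
    Sum.elim c 0 ᵥ* (dupGraph G k v m).adjMatrix R =
      Sum.elim (c ᵥ* G.adjMatrix R) (fun p => (c ᵥ* G.adjMatrix R) (v p.1)) := by
  ext (w | ⟨i, j⟩) <;>
    simp [vecMul, dotProduct, Fintype.sum_sum_type, SimpleGraph.adjMatrix_apply]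

end dupGraph

theorem dupGraph_ackProp_general {V : Type} [Fintype V] [DecidableEq V]
    (G : SimpleGraph V) [DecidableRel G.Adj]
    (hnut1 : Module.finrank ℝ ↥(LinearMap.ker (G.adjMatrix ℝ).mulVecLin) = 1)
    (x : V → ℝ) (hx : x ≠ 0) (hker : (G.adjMatrix ℝ).mulVec x = 0)
    (k : ℕ) (v : Fin k → V)
    (S : Finset V) (hS : S.Nonempty) (hdisj : ∀ i, v i ∉ S)
    (hsum : ∑ u ∈ S, x u = 0)
    (hnd : ∀ i, (fun u => if u ∈ S then (1 : ℝ) else 0) ≠ (G.adjMatrix ℝ) i)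
    (m : Fin k → ℕ) :
    AckProp (dupGraph G k v m) := by
  set χ : V → ℝ := fun u => if u ∈ S then 1 else 0
  have hχx : x ⬝ᵥ χ = 0 := by simpa [χ, dotProduct, Finset.sum_ite_mem] using hsum
  obtain ⟨c, hc⟩ :=
    G.isSymm_adjMatrix.mem_range_mulVecLin_of_dotProduct_eq_zero hnut1 hx hker hχx
  have hrow : Sum.elim c 0 ᵥ* (dupGraph G k v m).adjMatrix ℝ = Sum.elim χ 0 := by
    rw [dupGraph.vecMul_adjMatrix, ← mulVec_transpose, G.isSymm_adjMatrix.eq,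
      ← mulVecLin_apply, hc]
    ext (u | ⟨i, j⟩) <;> simp [χ, hdisj]
  refine ⟨Sum.elim χ 0, ?_, ?_, ?_, ?_⟩
  · obtain ⟨s, hs⟩ := hS
    exact fun h => by simpa [χ, hs] using congrFun h (.inl s)
  · rintro (u | p) <;> simp [χ, em']
  · rw [← hrow]
    exact (range_vecMulLinear _).le (LinearMap.mem_range_self _ _)
  · intro a h
    exact hnd _ (funext fun w => by
      simpa only [Sum.elim_inl, dupGraph.adjMatrix_apply_inl] using congrFun h (.inl w))

/-- Let `G` be a nut graph with kernel vector `x`, and let `S` be a nonempty zero-sum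
subset (relative to `x`) disjoint from `T = {v 1, …, v k}` whose characteristic vector is
not a row of `A_G`.  Then the graph `F` obtained from `G` by duplicating each `v i`
(`m i ≥ 1` times) satisfies the ACK property. -/
theorem dupGraph_ackProp {V : Type} [Fintype V] [DecidableEq V]
    (G : SimpleGraph V) [DecidableRel G.Adj]
    (hnut1 : Module.finrank ℝ ↥(LinearMap.ker (G.adjMatrix ℝ).mulVecLin) = 1)
    (hnut2 : ∀ y : V → ℝ, (G.adjMatrix ℝ).mulVec y = 0 → y ≠ 0 → ∀ u, y u ≠ 0)
    (x : V → ℝ) (hx : x ≠ 0) (hker : (G.adjMatrix ℝ).mulVec x = 0)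
    (k : ℕ) (v : Fin k → V)
    (S : Finset V) (hS : S.Nonempty) (hdisj : ∀ i, v i ∉ S)
    (hsum : ∑ u ∈ S, x u = 0)
    (hnd : ∀ i, (fun u => if u ∈ S then (1 : ℝ) else 0) ≠ (G.adjMatrix ℝ) i)
    (m : Fin k → ℕ) (hm : ∀ i, 1 ≤ m i) :
    AckProp (dupGraph G k v m) :=
  dupGraph_ackProp_general G hnut1 x hx hker k v S hS hdisj hsum hnd m
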